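/- Fix $\gamma > 0$, let $(T_k)_{k\geq 2}$ be i.i.d. Exp(1) and $(\mathbf{C}_j)_{j\geq 1}$ i.i.d. Exp($\gamma$), all independent. For a nonempty subset $A = \{a_1 < a_2 < \cdots < a_\ell\} \subset \{1,\ldots,n\}$ with the convention $a_{\ell+1} = n+1$, the probability that $\mathbf{C}_{a_j} > \sum_{k=a_j+1}^{n+1} T_k$ for all $j = 1,\ldots,\ell$ equals $\prod_{j=1}^\ell (1 + j\gamma)^{-(a_{j+1} - a_j)}$. -/

import Mathlib

/-!
The clocks `C i`, `i ∈ A := a '' [1, ℓ]`, are independent Exp(γ) variables, independent of the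
passage times, so conditionally on the `T k` the event has probability `∏_{i ∈ A} exp (-γ S i)`
with `S i = ∑_{k = i+1}^{n+1} T k`. Exchanging the sums, `∑_{i ∈ A} S i = ∑_k m k • T k` where
`m k = #{i ∈ A | i < k}`, and independence of the `T k` turns the expectation into
`∏_k (1 + m k γ)⁻¹`. Finally `m k = j` exactly when `a j < k ≤ a (j + 1)`.
-/

open MeasureTheory ProbabilityTheory Real
open scoped ENNReal

namespace ProbabilityTheory

open Set

lemma expMeasure_eq_withDensity (r : ℝ) : expMeasure r = volume.withDensity (exponentialPDF r) :=
  rfl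

lemma measurable_exponentialPDF (r : ℝ) : Measurable (exponentialPDF r) :=
  (measurable_exponentialPDFReal r).ennreal_ofReal

lemma lintegral_exp_neg_mul_expMeasure {r c : ℝ} (hr : 0 < r) (hrc : 0 < r + c) :
    ∫⁻ x, ENNReal.ofReal (exp (-(c * x))) ∂expMeasure r = ENNReal.ofReal (r / (r + c)) := by
  have hdens : ∀ x, exponentialPDF r x * ENNReal.ofReal (exp (-(c * x)))
      = ENNReal.ofReal (r / (r + c)) * exponentialPDF (r + c) x := by
    intro x
    rcases le_or_gt 0 x with hx | hx
    · rw [exponentialPDF_of_nonneg hx, exponentialPDF_of_nonneg hx,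
        ← ENNReal.ofReal_mul (by positivity), ← ENNReal.ofReal_mul (by positivity)]
      congr 1
      rw [mul_assoc, ← exp_add]
      field_simp
      ring_nf
    · simp [exponentialPDF_of_neg hx]
  rw [expMeasure_eq_withDensity, lintegral_withDensity_eq_lintegral_mul _
    (measurable_exponentialPDF r) (by fun_prop)]
  simp only [Pi.mul_apply, hdens]
  rw [lintegral_const_mul _ (measurable_exponentialPDF _),
    lintegral_exponentialPDF_eq_one hrc, mul_one]

lemma ae_nonneg_expMeasure (r : ℝ) : ∀ᵐ x ∂expMeasure r, 0 ≤ x := by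
  simp only [ae_iff, not_le]
  change expMeasure r (Iio 0) = 0
  rw [expMeasure_eq_withDensity, withDensity_apply _ measurableSet_Iio]
  exact lintegral_exponentialPDF_of_nonpos le_rfl

lemma expMeasure_Ioi {r s : ℝ} (hr : 0 < r) (hs : 0 ≤ s) :
    expMeasure r (Ioi s) = ENNReal.ofReal (exp (-(r * s))) := by
  have := isProbabilityMeasure_expMeasure hr
  have hle : ENNReal.ofReal (exp (-(r * s))) ≤ 1 :=
    ENNReal.ofReal_le_one.2 (exp_le_one_iff.2 (by nlinarith))
  rw [← compl_Iic, prob_compl_eq_one_sub measurableSet_Iic, ← ofReal_cdf, cdf_expMeasure_eq hr,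
    if_pos hs, ENNReal.ofReal_sub _ (exp_pos _).le, ENNReal.ofReal_one,
    ENNReal.sub_sub_cancel ENNReal.one_ne_top hle]

variable {Ω : Type*} [MeasurableSpace Ω] {μ : Measure Ω}

lemma iIndepFun.indepFun_sumElim {ι κ β : Type*} [MeasurableSpace β]
    {X : ι → Ω → β} {Y : κ → Ω → β} (h : iIndepFun (Sum.elim X Y) μ)
    (hX : ∀ i, Measurable (X i)) (hY : ∀ j, Measurable (Y j)) :
    IndepFun (fun ω i ↦ X i ω) (fun ω j ↦ Y j ω) μ := by
  have hle : ∀ x, (inferInstance : MeasurableSpace β).comap (Sum.elim X Y x) ≤ ‹_› := by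
    rintro (i | j)
    exacts [(hX i).comap_le, (hY j).comap_le]
  have := indep_iSup_of_disjoint hle h.iIndep Set.isCompl_range_inl_range_inr.disjoint
  rw [iSup_range, iSup_range] at this
  rwa [IndepFun_iff_Indep, MeasurableSpace.comap_process_pi, MeasurableSpace.comap_process_pi]

lemma measure_forall_lt_eq_lintegral {β ι : Type*} [MeasurableSpace β] [IsProbabilityMeasure μ]
    {W : Ω → β} {Y : ι → Ω → ℝ} (hW : Measurable W) (hY : ∀ i, Measurable (Y i))
    (hWY : IndepFun W (fun ω i ↦ Y i ω) μ) (hYY : iIndepFun Y μ)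
    {g : ι → β → ℝ} (hg : ∀ i, Measurable (g i)) (s : Finset ι) :
    μ {ω | ∀ i ∈ s, g i (W ω) < Y i ω}
      = ∫⁻ ω, ∏ i ∈ s, μ.map (Y i) (Ioi (g i (W ω))) ∂μ := by
  have : ∀ i, IsProbabilityMeasure (μ.map (Y i)) :=
    fun i ↦ Measure.isProbabilityMeasure_map (hY i).aemeasurable
  have hV : Measurable fun ω i ↦ Y i ω := measurable_pi_lambda _ hY
  set E : Set (β × (ι → ℝ)) := {p | ∀ i ∈ s, g i p.1 < p.2 i}
  have hE : MeasurableSet E := by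
    simp only [E, Set.ofPred_forall]
    exact .biInter s.countable_toSet fun i _ ↦
      measurableSet_lt ((hg i).comp measurable_fst) ((measurable_pi_apply i).comp measurable_snd)
  have hslice : ∀ w, Prod.mk w ⁻¹' E = (s : Set ι).pi fun i ↦ Ioi (g i w) := by
    intro w; ext y; simp [E]
  have hmeas : Measurable fun w ↦ ∏ i ∈ s, μ.map (Y i) (Ioi (g i w)) :=
    Finset.measurable_prod _ fun i _ ↦
      (Antitone.measurable fun _ _ h ↦ measure_mono (Ioi_subset_Ioi h)).comp (hg i)
  calc μ {ω | ∀ i ∈ s, g i (W ω) < Y i ω}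
      = μ.map (fun ω ↦ (W ω, fun i ↦ Y i ω)) E := (Measure.map_apply (hW.prodMk hV) hE).symm
    _ = ∫⁻ w, Measure.infinitePi (fun i ↦ μ.map (Y i)) (Prod.mk w ⁻¹' E) ∂μ.map W := by
      rw [(indepFun_iff_map_prod_eq_prod_map_map hW.aemeasurable hV.aemeasurable).1 hWY,
        hYY.map_fun_eq_infinitePi_map hY, Measure.prod_apply hE]
    _ = ∫⁻ w, ∏ i ∈ s, μ.map (Y i) (Ioi (g i w)) ∂μ.map W := by
      simp_rw [hslice, Measure.infinitePi_pi _ fun i _ ↦ measurableSet_Ioi]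
    _ = _ := lintegral_map hmeas hW

lemma lintegral_prod_exp_neg_mul {ι : Type*} {T : ι → Ω → ℝ} (hT : ∀ k, Measurable (T k))
    (hTT : iIndepFun T μ) {r : ℝ} (hr : 0 < r) (hlaw : ∀ k, μ.map (T k) = expMeasure r)
    {c : ι → ℝ} (s : Finset ι) (hc : ∀ k ∈ s, 0 < r + c k) :
    ∫⁻ ω, ∏ k ∈ s, ENNReal.ofReal (exp (-(c k * T k ω))) ∂μ
      = ∏ k ∈ s, ENNReal.ofReal (r / (r + c k)) := by
  refine (lintegral_prod_eq_prod_lintegral_of_indepFun s _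
    (hTT.comp (fun k x ↦ ENNReal.ofReal (exp (-(c k * x)))) fun k ↦ by fun_prop)
    fun k ↦ by fun_prop).trans (Finset.prod_congr rfl fun k hk ↦ ?_)
  rw [← lintegral_exp_neg_mul_expMeasure hr (hc k hk), ← hlaw k]
  exact (lintegral_map (f := fun x ↦ ENNReal.ofReal (exp (-(c k * x)))) (by fun_prop) (hT k)).symm

end ProbabilityTheory

open Finset

lemma sum_sum_Icc_eq_sum_card_smul {M : Type*} [AddCommMonoid M] (A : Finset ℕ) (N : ℕ)
    (x : ℕ → M) :
    ∑ i ∈ A, ∑ k ∈ Icc (i + 1) N, x k = ∑ k ∈ range (N + 1), #{i ∈ A | i < k} • x k := by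
  have hIcc : ∀ i, Icc (i + 1) N = {k ∈ range (N + 1) | i < k} := by
    intro i; ext k; simp only [mem_Icc, mem_filter, mem_range]; omega
  simp_rw [hIcc, sum_filter]
  rw [sum_comm]
  refine sum_congr rfl fun k _ ↦ ?_
  rw [← sum_filter, sum_const]

lemma prod_range_card_filter_lt_eq_prod_pow {M : Type*} [CommMonoid M] {g : ℕ → M} (hg : g 0 = 1)
    {a : ℕ → ℕ} {ℓ : ℕ} (ha : StrictMonoOn a (Set.Icc 1 (ℓ + 1))) :
    ∏ k ∈ range (a (ℓ + 1) + 1), g #{j ∈ Icc 1 ℓ | a j < k}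
      = ∏ j ∈ Icc 1 ℓ, g j ^ (a (j + 1) - a j) := by
  induction ℓ with
  | zero => simp [hg]
  | succ ℓ ih =>
    have ha' : StrictMonoOn a (Set.Icc 1 (ℓ + 1)) :=
      ha.mono (Set.Icc_subset_Icc_right (by omega))
    have hlt : a (ℓ + 1) < a (ℓ + 2) := ha (by simp) (by simp) (by omega)
    have hle : ∀ j ∈ Icc 1 (ℓ + 1), a j ≤ a (ℓ + 1) := fun j hj ↦
      ha'.monotoneOn (by simpa using hj) (by simp) (mem_Icc.1 hj).2
    have hlow : ∀ k ∈ range (a (ℓ + 1) + 1),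
        #{j ∈ Icc 1 (ℓ + 1) | a j < k} = #{j ∈ Icc 1 ℓ | a j < k} := by
      intro k hk
      rw [← insert_Icc_right_eq_Icc_add_one (by omega), filter_insert,
        if_neg (by simp only [mem_range] at hk; omega)]
    have hhigh : ∀ k ∈ Ico (a (ℓ + 1) + 1) (a (ℓ + 2) + 1),
        #{j ∈ Icc 1 (ℓ + 1) | a j < k} = ℓ + 1 := by
      intro k hk
      rw [filter_true_of_mem fun j hj ↦ by have := hle j hj; simp only [mem_Ico] at hk; omega,
        Nat.card_Icc, Nat.add_sub_cancel]
    rw [← prod_range_mul_prod_Ico _ (by omega : a (ℓ + 1) + 1 ≤ a (ℓ + 2) + 1),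
      prod_congr rfl fun k hk ↦ congrArg g (hlow k hk), ih ha',
      prod_congr rfl fun k hk ↦ congrArg g (hhigh k hk), prod_const, Nat.card_Ico,
      prod_Icc_succ_top (by omega), Nat.add_sub_add_right]

lemma prod_expMeasure_Ioi_sum_Icc {r : ℝ} (hr : 0 < r) (A : Finset ℕ) (N : ℕ) {x : ℕ → ℝ}
    (hx : ∀ k, 0 ≤ x k) :
    ∏ i ∈ A, expMeasure r (Set.Ioi (∑ k ∈ Icc (i + 1) N, x k))
      = ∏ k ∈ range (N + 1), ENNReal.ofReal (exp (-((#{i ∈ A | i < k} * r) * x k))) := by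
  rw [prod_congr rfl fun i _ ↦ expMeasure_Ioi hr (sum_nonneg fun k _ ↦ hx k),
    ← ENNReal.ofReal_prod_of_nonneg fun _ _ ↦ (exp_pos _).le,
    ← ENNReal.ofReal_prod_of_nonneg fun _ _ ↦ (exp_pos _).le, ← exp_sum, ← exp_sum]
  congr 2
  simp_rw [sum_neg_distrib, ← mul_sum, sum_sum_Icc_eq_sum_card_smul, mul_sum, nsmul_eq_mul]
  exact congrArg _ (sum_congr rfl fun k _ ↦ by ring)

theorem recovery_event_probability_general
    {Ω : Type*} [MeasureSpace Ω] [IsProbabilityMeasure (ℙ : Measure Ω)]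
    (γ : ℝ) (hγ : 0 < γ)
    (T : ℕ → Ω → ℝ) (C : ℕ → Ω → ℝ)
    (hTmeas : ∀ k, Measurable (T k)) (hCmeas : ∀ j, Measurable (C j))
    (hindep : iIndepFun
      (Sum.elim T C : ℕ ⊕ ℕ → Ω → ℝ) ℙ)
    (hTdist : ∀ k, Measure.map (T k) ℙ = expMeasure 1)
    (hCdist : ∀ j, Measure.map (C j) ℙ = expMeasure γ)
    (n ℓ : ℕ) (a : ℕ → ℕ)
    (hmono : StrictMonoOn a (Set.Icc 1 ℓ))
    (han : a ℓ ≤ n) (hatop : a (ℓ + 1) = n + 1) :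
    ℙ {ω | ∀ j ∈ Finset.Icc 1 ℓ,
        (∑ k ∈ Finset.Icc (a j + 1) (n + 1), T k ω) < C (a j) ω}
      = ENNReal.ofReal
          (∏ j ∈ Finset.Icc 1 ℓ, ((1 + (j : ℝ) * γ) ^ (a (j + 1) - a j))⁻¹) := by
  set A := (Icc 1 ℓ).image a
  have ha : StrictMonoOn a (Set.Icc 1 (ℓ + 1)) := by
    rw [← Set.insert_Icc_right_eq_Icc_add_one (by omega),
      strictMonoOn_insert_iff_of_forall_le fun x hx ↦ by simp only [Set.mem_Icc] at hx; omega]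
    exact ⟨fun b hb _ ↦
      (hmono.monotoneOn hb ⟨hb.1.trans hb.2, le_rfl⟩ hb.2).trans_lt (by omega), hmono⟩
  have hcard : ∀ k, #{i ∈ A | i < k} = #{j ∈ Icc 1 ℓ | a j < k} := fun k ↦ by
    rw [filter_image, card_image_of_injOn (hmono.injOn.mono fun j hj ↦ by
      simpa using (mem_filter.1 hj).1)]
  have hTnonneg : ∀ᵐ ω ∂ℙ, ∀ k, 0 ≤ T k ω := ae_all_iff.2 fun k ↦
    ae_of_ae_map (hTmeas k).aemeasurable (hTdist k ▸ ae_nonneg_expMeasure 1)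
  calc ℙ {ω | ∀ j ∈ Icc 1 ℓ, (∑ k ∈ Icc (a j + 1) (n + 1), T k ω) < C (a j) ω}
      = ℙ {ω | ∀ i ∈ A, (∑ k ∈ Icc (i + 1) (n + 1), T k ω) < C i ω} := by
        simp only [A, forall_mem_image]
    _ = ∫⁻ ω, ∏ i ∈ A, expMeasure γ (Set.Ioi (∑ k ∈ Icc (i + 1) (n + 1), T k ω)) ∂ℙ := by
      rw [measure_forall_lt_eq_lintegral (W := fun ω k ↦ T k ω) (measurable_pi_lambda _ hTmeas)
        hCmeas (hindep.indepFun_sumElim hTmeas hCmeas)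
        (hindep.precomp (g := Sum.inr) Sum.inr_injective)
        (g := fun i x ↦ ∑ k ∈ Icc (i + 1) (n + 1), x k) (fun i ↦ by fun_prop) A]
      simp only [hCdist]
    _ = ∫⁻ ω, ∏ k ∈ range (n + 1 + 1),
          ENNReal.ofReal (exp (-((#{i ∈ A | i < k} * γ) * T k ω))) ∂ℙ :=
      lintegral_congr_ae (hTnonneg.mono fun ω hω ↦ prod_expMeasure_Ioi_sum_Icc hγ A (n + 1) hω)
    _ = ∏ k ∈ range (n + 1 + 1), ENNReal.ofReal (1 / (1 + #{i ∈ A | i < k} * γ)) :=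
      lintegral_prod_exp_neg_mul hTmeas (hindep.precomp (g := Sum.inl) Sum.inl_injective) one_pos
        hTdist _ fun k _ ↦ by positivity
    _ = _ := by
      rw [← ENNReal.ofReal_prod_of_nonneg fun k _ ↦ by positivity]
      simp_rw [hcard, one_div]
      rw [← hatop,
        prod_range_card_filter_lt_eq_prod_pow (g := fun m : ℕ ↦ (1 + m * γ)⁻¹) (by simp) ha]
      simp [inv_pow]

/-- In FPP with recovery on the semi-line, for a subset
`A = {a 1 < a 2 < ⋯ < a ℓ} ⊆ {1,…,n}` with the convention `a (ℓ+1) = n+1`,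
the probability that every clock `C (a j)` exceeds `∑_{k=a j+1}^{n+1} T k`
equals `∏_{j=1}^ℓ (1 + jγ)^{-(a (j+1) - a j)}`. -/
theorem recovery_event_probability
    {Ω : Type*} [MeasureSpace Ω] [IsProbabilityMeasure (ℙ : Measure Ω)]
    (γ : ℝ) (hγ : 0 < γ)
    (T : ℕ → Ω → ℝ) (C : ℕ → Ω → ℝ)
    (hTmeas : ∀ k, Measurable (T k)) (hCmeas : ∀ j, Measurable (C j))
    (hindep : iIndepFun
      (Sum.elim T C : ℕ ⊕ ℕ → Ω → ℝ) ℙ)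
    (hTdist : ∀ k, Measure.map (T k) ℙ = expMeasure 1)
    (hCdist : ∀ j, Measure.map (C j) ℙ = expMeasure γ)
    (n ℓ : ℕ) (hℓ : 1 ≤ ℓ) (a : ℕ → ℕ)
    (hmono : StrictMonoOn a (Set.Icc 1 ℓ))
    (ha1 : 1 ≤ a 1) (han : a ℓ ≤ n) (hatop : a (ℓ + 1) = n + 1) :
    ℙ {ω | ∀ j ∈ Finset.Icc 1 ℓ,
        (∑ k ∈ Finset.Icc (a j + 1) (n + 1), T k ω) < C (a j) ω}
      = ENNReal.ofReal
          (∏ j ∈ Finset.Icc 1 ℓ, ((1 + (j : ℝ) * γ) ^ (a (j + 1) - a j))⁻¹) :=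
  recovery_event_probability_general γ hγ T C hTmeas hCmeas hindep hTdist hCdist n ℓ a hmono han
    hatop
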